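/- arXiv:1704.05451 — 3 statements merged into one kernel-verified Lean document; each statement's English description precedes it below -/
import Mathlib

section
/- For all integers k ≥ 2 and m ≥ 1, the half-range Hermite integrals satisfy the recursion S*(k, m) = (k − 1)·S*(k−2, m) + m·S*(k−1, m−1). -/
open Polynomial MeasureTheory

/-- Probabilists' Hermite polynomials: He₀ = 1, He₁ = x,
    He_{n+1} = x·He_n − n·He_{n−1}. -/
noncomputable def He : ℕ → Polynomial ℝ
  | 0 => 1
  | 1 => Polynomial.X
  | (n + 2) => Polynomial.X * He (n + 1) - Polynomial.C ((n : ℝ) + 1) * He n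

/-- Half-range Hermite integral S*(k,m) = ∫₀^∞ ξ^k He_m(ξ) e^{−ξ²/2} dξ. -/
noncomputable def Sstar (k m : ℕ) : ℝ :=
  ∫ x in Set.Ioi (0 : ℝ), x ^ k * (He m).eval x * Real.exp (-x ^ 2 / 2)

/-!
Integrate `(x^{k-1} He_m(x) e^{-x²/2})' = ((k-1) x^{k-2} He_m + x^{k-1} He_m' - x^k He_m) e^{-x²/2}`
over `(0, ∞)`: the boundary terms vanish (at `0` because `k ≥ 2`, at `∞` because of the Gaussian),
and `He_m' = m He_{m-1}`.
-/

open Set Real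

lemma derivative_He_succ : ∀ n : ℕ, derivative (He (n + 1)) = C ((n : ℝ) + 1) * He n
  | 0 => by simp [He]
  | 1 => by simp [He, add_mul]
  | n + 2 => by
      rw [He, derivative_sub, derivative_mul, derivative_mul, derivative_X, derivative_C,
        derivative_He_succ (n + 1), derivative_He_succ n, He]
      push_cast
      simp only [map_add, map_one, map_natCast, map_ofNat]
      ring

lemma hasDerivAt_eval_mul_exp_neg_sq_div_two (P : ℝ[X]) (x : ℝ) :
    HasDerivAt (fun y => P.eval y * exp (-y ^ 2 / 2))
      ((derivative P - X * P).eval x * exp (-x ^ 2 / 2)) x := by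
  have hexp : HasDerivAt (fun y => exp (-y ^ 2 / 2)) (exp (-x ^ 2 / 2) * -x) x :=
    (((hasDerivAt_pow 2 x).neg.div_const 2).congr_deriv (by norm_num; ring)).exp
  refine ((P.hasDerivAt x).mul hexp).congr_deriv ?_
  simp only [eval_sub, eval_mul, eval_X]
  ring

lemma integrableOn_eval_mul_exp_neg_sq_div_two (P : ℝ[X]) :
    IntegrableOn (fun x => P.eval x * exp (-x ^ 2 / 2)) (Ioi 0) := by
  induction P using Polynomial.induction_on' with
  | add p q hp hq =>
      exact (hp.add hq).congr_fun (fun x _ => by simp [add_mul]) measurableSet_Ioi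
  | monomial n c =>
      have h := (integrableOn_rpow_mul_exp_neg_mul_sq (b := 1 / 2) (by norm_num)
        (s := n) (by linarith [n.cast_nonneg (α := ℝ)])).const_mul c
      refine IntegrableOn.congr_fun h (fun x _ => ?_) measurableSet_Ioi
      simp only [rpow_natCast, eval_monomial]
      ring_nf

noncomputable def halfGaussianIntegral : ℝ[X] →ₗ[ℝ] ℝ where
  toFun P := ∫ x in Ioi 0, P.eval x * exp (-x ^ 2 / 2)
  map_add' p q := by
    simp only [eval_add, add_mul]
    exact integral_add (integrableOn_eval_mul_exp_neg_sq_div_two p)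
      (integrableOn_eval_mul_exp_neg_sq_div_two q)
  map_smul' c p := by
    simp only [eval_smul, smul_eq_mul, mul_assoc, RingHom.id_apply]
    exact integral_const_mul c _

lemma Sstar_eq_halfGaussianIntegral (k m : ℕ) :
    Sstar k m = halfGaussianIntegral (X ^ k * He m) := by
  simp [Sstar, halfGaussianIntegral]

lemma halfGaussianIntegral_derivative_sub_X_mul (Q : ℝ[X]) :
    halfGaussianIntegral (derivative Q - X * Q) = -Q.eval 0 := by
  have hderiv := hasDerivAt_eval_mul_exp_neg_sq_div_two Q
  have hint := integrableOn_eval_mul_exp_neg_sq_div_two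
  have hlim := tendsto_zero_of_hasDerivAt_of_integrableOn_Ioi (a := 0)
    (fun x _ => hderiv x) (hint _) (hint Q)
  change ∫ x in Ioi 0, _ = _
  rw [integral_Ioi_of_hasDerivAt_of_tendsto' (fun x _ => hderiv x) (hint _) hlim]
  simp

/-- Recursion S*(k,m) = (k−1)·S*(k−2,m) + m·S*(k−1,m−1) for k ≥ 2, m ≥ 1. -/
theorem sstar_recursion (k m : ℕ) (hk : 2 ≤ k) (hm : 1 ≤ m) :
    Sstar k m = (k - 1 : ℝ) * Sstar (k - 2) m + (m : ℝ) * Sstar (k - 1) (m - 1) := by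
  obtain ⟨a, rfl⟩ : ∃ a, k = a + 2 := ⟨k - 2, by omega⟩
  obtain ⟨b, rfl⟩ : ∃ b, m = b + 1 := ⟨m - 1, by omega⟩
  have hQ : derivative (X ^ (a + 1) * He (b + 1)) - X * (X ^ (a + 1) * He (b + 1)) =
      ((a : ℝ) + 1) • (X ^ a * He (b + 1)) + ((b : ℝ) + 1) • (X ^ (a + 1) * He b)
        - X ^ (a + 2) * He (b + 1) := by
    rw [derivative_mul, derivative_X_pow, derivative_He_succ, ← C_mul', ← C_mul']
    push_cast
    ring
  have hparts := halfGaussianIntegral_derivative_sub_X_mul (X ^ (a + 1) * He (b + 1))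
  rw [hQ, map_sub, map_add, map_smul, map_smul] at hparts
  simp only [Nat.add_sub_cancel, Sstar_eq_halfGaussianIntegral]
  simp only [smul_eq_mul, eval_mul, eval_pow, eval_X, zero_pow (Nat.succ_ne_zero a), zero_mul,
    neg_zero] at hparts
  push_cast
  linarith
end

section
/- For all integers k ≥ 0 and m ≥ 0 with m ≤ k: if k − m is even then S*(k, m) = √(2π)·A for some algebraic real number A, and if k − m is odd then S*(k, m) is an algebraic real number. -/
open Polynomial MeasureTheory Real

/-!
Expanding `He m` in monomials writes `S*(k, m)` as a rational combination of the half-line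
Gaussian moments `M n = ∫₀^∞ xⁿ e^{-x²/2} dx`, and only moments with `n ≡ k - m (mod 2)` occur,
because `He m` has the parity of `m`. Since `M n = 2^{(n-1)/2} Γ((n+1)/2)`, the moments satisfy
`M (n + 2) = (n + 1) M n` with `M 0 = √(2π)/2` and `M 1 = 1`: the even moments are rational
multiples of `√(2π)` and the odd ones are rational.
-/

open Finset Submodule

theorem He_mem_lifts (n : ℕ) : He n ∈ lifts (algebraMap ℚ ℝ) := by
  rw [lifts_iff_liftsRing]
  induction n using Nat.twoStepInduction with
  | zero => exact one_mem _
  | one => exact (lifts_iff_liftsRing _ _).mp (X_mem_lifts _)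
  | more n ih₁ ih₂ =>
    have hX := (lifts_iff_liftsRing _ _).mp (X_mem_lifts (algebraMap ℚ ℝ))
    have hC := (lifts_iff_liftsRing _ _).mp (C_mem_lifts (algebraMap ℚ ℝ) ((n : ℚ) + 1))
    rw [map_add, map_natCast, map_one] at hC
    exact sub_mem (mul_mem hX ih₂) (mul_mem hC ih₁)

theorem coeff_He_eq_zero_of_odd {n i : ℕ} (h : Odd (n + i)) : (He n).coeff i = 0 := by
  induction n using Nat.twoStepInduction generalizing i with
  | zero =>
    rw [He, coeff_one, if_neg]
    rintro rfl
    exact Nat.not_odd_zero h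
  | one =>
    rw [He, coeff_X, if_neg]
    rintro rfl
    exact Nat.not_odd_iff_even.mpr even_two h
  | more n ih₁ ih₂ =>
    rw [add_right_comm] at h
    replace h := (Nat.odd_add.mp h).mpr even_two
    rw [He, coeff_sub, coeff_C_mul, ih₁ h, mul_zero, sub_zero]
    cases i with
    | zero => rw [mul_coeff_zero, coeff_X_zero, zero_mul]
    | succ j => rw [coeff_X_mul, ih₂ (by rwa [add_right_comm, add_assoc])]

noncomputable def halfGaussianMoment (n : ℕ) : ℝ :=
  ∫ x in Set.Ioi (0 : ℝ), x ^ n * exp (-x ^ 2 / 2)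

local notation "M" => halfGaussianMoment

theorem integrableOn_pow_mul_exp_neg_sq_div_two (n : ℕ) :
    IntegrableOn (fun x : ℝ => x ^ n * exp (-x ^ 2 / 2)) (Set.Ioi 0) := by
  refine (integrableOn_rpow_mul_exp_neg_mul_sq (b := 1 / 2) (by norm_num)
    (s := n) (by linarith [n.cast_nonneg (α := ℝ)])).congr_fun (fun x _ => ?_) measurableSet_Ioi
  simp only [rpow_natCast]
  ring_nf

theorem halfGaussianMoment_eq_Gamma (n : ℕ) :
    M n = 2 ^ (((n : ℝ) - 1) / 2) * Gamma ((n + 1) / 2) := by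
  have hb : ((1 : ℝ) / 2) ^ (-((n : ℝ) + 1) / 2) = 2 ^ (((n : ℝ) - 1) / 2) * 2 := by
    rw [one_div, inv_rpow zero_le_two, ← rpow_neg zero_le_two, ← rpow_add_one two_ne_zero]
    ring_nf
  calc M n = ∫ x in Set.Ioi (0 : ℝ), x ^ (n : ℝ) * exp (-(1 / 2) * x ^ (2 : ℝ)) := by
        refine setIntegral_congr_fun measurableSet_Ioi fun x _ => ?_
        simp only [rpow_natCast, rpow_two]
        ring_nf
    _ = 2 ^ (((n : ℝ) - 1) / 2) * Gamma ((n + 1) / 2) := by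
        rw [integral_rpow_mul_exp_neg_mul_rpow two_pos (by linarith [n.cast_nonneg (α := ℝ)])
          one_half_pos, hb]
        ring

theorem halfGaussianMoment_add_two (n : ℕ) : M (n + 2) = (n + 1) * M n := by
  rw [halfGaussianMoment_eq_Gamma, halfGaussianMoment_eq_Gamma, Nat.cast_add, Nat.cast_ofNat,
    show ((n : ℝ) + 2 + 1) / 2 = (n + 1) / 2 + 1 by ring, Gamma_add_one (by positivity),
    show ((n : ℝ) + 2 - 1) / 2 = (n - 1) / 2 + 1 by ring, rpow_add_one two_ne_zero]
  ring

theorem halfGaussianMoment_zero : M 0 = √(2 * π) / 2 := by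
  have h := integral_gaussian_Ioi (1 / 2)
  rw [div_div_eq_mul_div, div_one, mul_comm] at h
  rw [halfGaussianMoment, ← h]
  simp only [pow_zero, one_mul]
  ring_nf

theorem halfGaussianMoment_one : M 1 = 1 := by
  rw [halfGaussianMoment_eq_Gamma]
  norm_num

theorem ratCast_mul_mem {K : Type*} [Field K] [CharZero K] {S : Submodule ℚ K} (q : ℚ) {x : K}
    (hx : x ∈ S) : (q : K) * x ∈ S :=
  Rat.smul_def q x ▸ S.smul_mem q hx

theorem halfGaussianMoment_mem_span (n : ℕ) :
    M n ∈ ℚ ∙ (if Even n then √(2 * π) else 1) := by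
  induction n using Nat.twoStepInduction with
  | zero =>
    rw [if_pos (by decide), halfGaussianMoment_zero, div_eq_inv_mul]
    simpa using ratCast_mul_mem 2⁻¹ (mem_span_singleton_self (√(2 * π)))
  | one =>
    rw [if_neg (by decide), halfGaussianMoment_one]
    exact mem_span_singleton_self 1
  | more n ih _ =>
    simp only [Nat.even_add, even_two, iff_true, halfGaussianMoment_add_two]
    exact_mod_cast ratCast_mul_mem (n + 1) ih

theorem setIntegral_pow_mul_eval_mul_exp (k : ℕ) (p : ℝ[X]) :
    ∫ x in Set.Ioi (0 : ℝ), x ^ k * p.eval x * exp (-x ^ 2 / 2) =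
      ∑ i ∈ p.support, p.coeff i * M (k + i) := by
  calc _ = ∫ x in Set.Ioi (0 : ℝ),
        ∑ i ∈ p.support, p.coeff i * (x ^ (k + i) * exp (-x ^ 2 / 2)) := by
        refine setIntegral_congr_fun measurableSet_Ioi fun x _ => ?_
        simp only [eval_eq_sum, Polynomial.sum_def, mul_sum, sum_mul, pow_add]
        exact sum_congr rfl fun i _ => by ring
    _ = _ := by
        rw [integral_finsetSum _ fun i _ =>
          (integrableOn_pow_mul_exp_neg_sq_div_two (k + i)).const_mul (p.coeff i)]
        simp only [integral_const_mul, halfGaussianMoment]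

theorem Sstar_mem_span {k m : ℕ} (hmk : m ≤ k) :
    Sstar k m ∈ ℚ ∙ (if Even (k - m) then √(2 * π) else 1) := by
  rw [Sstar, setIntegral_pow_mul_eval_mul_exp]
  refine sum_mem fun i hi => ?_
  have hparity : Even (k + i) ↔ Even (k - m) := by
    have hmi : Even (m + i) := by
      by_contra h
      exact mem_support_iff.mp hi (coeff_He_eq_zero_of_odd (Nat.not_even_iff_odd.mp h))
    rw [show k + i = k - m + (m + i) by omega, Nat.even_add, iff_true_right hmi]
  obtain ⟨q, hq⟩ := (lifts_iff_coeff_lifts _).mp (He_mem_lifts m) i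
  rw [← hq, eq_ratCast]
  simp only [← hparity]
  exact ratCast_mul_mem q (halfGaussianMoment_mem_span (k + i))

theorem exists_isAlgebraic_eq_mul_of_mem_span_singleton {K L : Type*} [Field K] [CommRing L]
    [Algebra K L] {x c : L} (h : x ∈ K ∙ c) : ∃ A : L, IsAlgebraic K A ∧ x = c * A := by
  obtain ⟨q, rfl⟩ := mem_span_singleton.mp h
  exact ⟨algebraMap K L q, isAlgebraic_algebraMap q, by rw [Algebra.smul_def, mul_comm]⟩

/-- For m ≤ k: if k − m is even then S*(k,m) = √(2π)·A with A algebraic;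
    if k − m is odd then S*(k,m) is algebraic. -/
theorem sstar_structure (k m : ℕ) (hmk : m ≤ k) :
    (Even (k - m) → ∃ A : ℝ, IsAlgebraic ℚ A ∧
      Sstar k m = Real.sqrt (2 * Real.pi) * A) ∧
    (Odd (k - m) → IsAlgebraic ℚ (Sstar k m)) := by
  have hmem := Sstar_mem_span hmk
  refine ⟨fun h => ?_, fun h => ?_⟩
  · rw [if_pos h] at hmem
    exact exists_isAlgebraic_eq_mul_of_mem_span_singleton hmem
  · rw [if_neg (Nat.not_even_iff_odd.mpr h)] at hmem
    obtain ⟨A, hA, hS⟩ := exists_isAlgebraic_eq_mul_of_mem_span_singleton hmem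
    rwa [hS, one_mul]
end

section
/- Let n ≥ 1, let A be a real n×n matrix which is real-diagonalizable, A = R·Λ·R⁻¹ with R invertible and Λ = diag(λ_1, ..., λ_n) real diagonal, and let Kn > 0. Suppose V : [0, ∞) → ℝⁿ is differentiable, satisfies A·V′(y) = −(1/Kn)·V(y) for all y ≥ 0, and is bounded on [0, ∞). Then, writing c = R⁻¹·V(0) and letting r_i denote the i-th column of R, one has c_i = 0 for every index i with λ_i ≤ 0, and for all y ≥ 0, V(y) = Σ_{i : λ_i > 0} c_i · exp(−y/(Kn·λ_i)) · r_i. -/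
/-!
In the eigen-coordinates `w = R⁻¹ V` the system decouples into the scalar equations
`λᵢ wᵢ' = -wᵢ / Kn`. A zero eigenvalue forces `wᵢ ≡ 0`; otherwise
`wᵢ y = wᵢ 0 · exp (-y / (Kn λᵢ))`, which is unbounded for `λᵢ < 0` unless `wᵢ 0 = 0`.
Each `wᵢ` is bounded because it is a continuous linear functional of `V`.
-/

open Matrix Set
open scoped BigOperators
open Filter

lemma eq_mul_exp_of_hasDerivWithinAt_Ici {f f' : ℝ → ℝ} {a : ℝ}
    (hf : ∀ y ∈ Ici (0 : ℝ), HasDerivWithinAt f (f' y) (Ici 0) y)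
    (hode : ∀ y ∈ Ici (0 : ℝ), f' y = a * f y) :
    ∀ y ∈ Ici (0 : ℝ), f y = f 0 * Real.exp (a * y) := by
  set g : ℝ → ℝ := fun y => f y * Real.exp (-(a * y))
  have hg : ∀ y ∈ Ici (0 : ℝ), HasDerivWithinAt g 0 (Ici 0) y := fun y hy => by
    refine ((hf y hy).mul ((hasDerivAt_id y).const_mul a).neg.exp.hasDerivWithinAt).congr_deriv ?_
    rw [hode y hy]; ring
  have hconst : ∀ y ∈ Ici (0 : ℝ), g y = g 0 := fun y hy =>
    convex_Ici 0 |>.is_const_of_fderivWithin_eq_zero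
      (fun x hx => (hg x hx).differentiableWithinAt)
      (fun x hx => by
        rw [(hg x hx).hasFDerivWithinAt.fderivWithin (uniqueDiffOn_Ici 0 x hx)]; simp)
      hy self_mem_Ici
  intro y hy
  have := hconst y hy
  simp only [g, mul_zero, neg_zero, Real.exp_zero, mul_one] at this
  rw [← this, mul_assoc, ← Real.exp_add, neg_add_cancel, Real.exp_zero, mul_one]

lemma eq_zero_of_abs_mul_exp_le {c a C : ℝ} (ha : 0 < a)
    (hC : ∀ y, 0 ≤ y → |c * Real.exp (a * y)| ≤ C) : c = 0 := by
  by_contra hc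
  have hlim : Tendsto (fun y => |c| * Real.exp (a * y)) atTop atTop :=
    (Real.tendsto_exp_atTop.comp (tendsto_id.const_mul_atTop ha)).const_mul_atTop (abs_pos.mpr hc)
  obtain ⟨y, hCy, hy⟩ := ((hlim.eventually_gt_atTop C).and (eventually_ge_atTop 0)).exists
  have := hC y hy
  rw [abs_mul, Real.abs_exp] at this
  exact this.not_gt hCy

lemma eq_ite_exp_of_mul_hasDerivWithinAt {w w' : ℝ → ℝ} {lam Kn C : ℝ} (hKn : 0 < Kn)
    (hw : ∀ y ∈ Ici (0 : ℝ), HasDerivWithinAt w (w' y) (Ici 0) y)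
    (hode : ∀ y ∈ Ici (0 : ℝ), lam * w' y = -(1 / Kn) * w y)
    (hC : ∀ y, 0 ≤ y → |w y| ≤ C) :
    ∀ y, 0 ≤ y → w y = if 0 < lam then w 0 * Real.exp (-y / (Kn * lam)) else 0 := by
  intro y hy
  rcases eq_or_ne lam 0 with rfl | hlam
  · have := hode y hy
    rw [zero_mul, eq_comm, mul_eq_zero] at this
    simpa [hKn.ne'] using this
  have hexp := eq_mul_exp_of_hasDerivWithinAt_Ici (a := -(1 / (Kn * lam))) hw fun x hx => by
    have := hode x hx
    field_simp at this ⊢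
    linarith
  rcases hlam.lt_or_gt with hneg | hpos
  · have hw0 : w 0 = 0 := by
      refine eq_zero_of_abs_mul_exp_le ?_ fun x hx => hexp x hx ▸ hC x hx
      exact neg_pos.mpr (one_div_neg.mpr (mul_neg_of_pos_of_neg hKn hneg))
    rw [if_neg hneg.not_gt, hexp y hy, hw0, zero_mul]
  · rw [if_pos hpos, hexp y hy, neg_mul, one_div_mul_eq_div, neg_div]

lemma inv_mulVec_mulVec_of_eq_conj_diagonal {ι K : Type*} [Fintype ι] [DecidableEq ι] [CommRing K]
    {A R : Matrix ι ι K} {lam : ι → K} (hR : IsUnit R.det) (hA : A = R * diagonal lam * R⁻¹)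
    (v : ι → K) : R⁻¹ *ᵥ (A *ᵥ v) = diagonal lam *ᵥ (R⁻¹ *ᵥ v) := by
  rw [hA, mulVec_mulVec, mulVec_mulVec, ← Matrix.mul_assoc, ← Matrix.mul_assoc,
    nonsing_inv_mul R hR, Matrix.one_mul]

theorem stable_mode_decomposition_general
    (n : ℕ)
    (A R : Matrix (Fin n) (Fin n) ℝ) (lam : Fin n → ℝ)
    (hR : IsUnit R.det)
    (hA : A = R * Matrix.diagonal lam * R⁻¹)
    (Kn : ℝ) (hKn : 0 < Kn)
    (V V' : ℝ → (Fin n → ℝ))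
    (hderiv : ∀ y, 0 ≤ y → HasDerivWithinAt V (V' y) (Set.Ici 0) y)
    (hode : ∀ y, 0 ≤ y → A.mulVec (V' y) = -(1 / Kn) • V y)
    (hbound : ∃ C : ℝ, ∀ y, 0 ≤ y → ‖V y‖ ≤ C) :
    (∀ i, lam i ≤ 0 → R⁻¹.mulVec (V 0) i = 0) ∧
    (∀ y, 0 ≤ y → V y = fun j =>
      ∑ i ∈ Finset.univ.filter (fun i => 0 < lam i),
        R⁻¹.mulVec (V 0) i * Real.exp (-y / (Kn * lam i)) * R j i) := by
  obtain ⟨C, hC⟩ := hbound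
  let L (i : Fin n) : (Fin n → ℝ) →L[ℝ] ℝ :=
    (ContinuousLinearMap.proj i).comp (mulVecLin R⁻¹).toContinuousLinearMap
  have hmode (i : Fin n) := eq_ite_exp_of_mul_hasDerivWithinAt (lam := lam i) (C := ‖L i‖ * C) hKn
    (fun y hy => (L i).hasFDerivAt.comp_hasDerivWithinAt y (hderiv y hy))
    (fun y hy => by
      have := congrArg (fun v => (R⁻¹ *ᵥ v) i) (hode y hy)
      rw [inv_mulVec_mulVec_of_eq_conj_diagonal hR hA, mulVec_diagonal, mulVec_smul] at this
      simpa [L] using this)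
    fun y hy => ((L i).le_opNorm (V y)).trans (mul_le_mul_of_nonneg_left (hC y hy) (norm_nonneg _))
  refine ⟨fun i hi => by simpa [L, hi.not_gt] using hmode i 0 le_rfl, fun y hy => ?_⟩
  have hW : R⁻¹ *ᵥ V y = fun i =>
      if 0 < lam i then (R⁻¹ *ᵥ V 0) i * Real.exp (-y / (Kn * lam i)) else 0 :=
    funext fun i => hmode i y hy
  calc V y = R *ᵥ (R⁻¹ *ᵥ V y) := by rw [mulVec_mulVec, mul_nonsing_inv R hR, one_mulVec]
    _ = _ := by
      ext j
      rw [hW, Finset.sum_filter, mulVec, dotProduct]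
      exact Finset.sum_congr rfl fun i _ => by split_ifs <;> simp only [mul_zero, mul_comm]

/-- Stable-mode decomposition: if A = R Λ R⁻¹ is real-diagonalizable,
    V is differentiable on [0,∞), solves A·V′ = −(1/Kn)·V there and is
    bounded, then writing c = R⁻¹ V(0), the coefficients of the
    non-positive modes vanish and V is a superposition of the decaying
    exponential modes. -/
theorem stable_mode_decomposition
    (n : ℕ) (hn : 1 ≤ n)
    (A R : Matrix (Fin n) (Fin n) ℝ) (lam : Fin n → ℝ)
    (hR : IsUnit R.det)
    (hA : A = R * Matrix.diagonal lam * R⁻¹)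
    (Kn : ℝ) (hKn : 0 < Kn)
    (V V' : ℝ → (Fin n → ℝ))
    (hderiv : ∀ y, 0 ≤ y → HasDerivWithinAt V (V' y) (Set.Ici 0) y)
    (hode : ∀ y, 0 ≤ y → A.mulVec (V' y) = -(1 / Kn) • V y)
    (hbound : ∃ C : ℝ, ∀ y, 0 ≤ y → ‖V y‖ ≤ C) :
    (∀ i, lam i ≤ 0 → R⁻¹.mulVec (V 0) i = 0) ∧
    (∀ y, 0 ≤ y → V y = fun j =>
      ∑ i ∈ Finset.univ.filter (fun i => 0 < lam i),
        R⁻¹.mulVec (V 0) i * Real.exp (-y / (Kn * lam i)) * R j i) :=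
  stable_mode_decomposition_general n A R lam hR hA Kn hKn V V' hderiv hode hbound
end
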